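/- There exists a linear functional h on l_p(ℕ), 1 ≤ p < ∞, such that h is discontinuous, yet for every sequence (a_k) of pairwise disjointly supported elements of l_p(ℕ), the sequence (h(a_k)) has at most one nonzero term. -/

import Mathlib

/-!
Fix a free ultrafilter `U` on `ℕ`. The sequences in `ℓ^p` vanishing `U`-almost everywhere form a
subspace `V` containing all finitely supported sequences, hence dense for `p < ∞`, yet proper.
Any linear functional `h ≠ 0` vanishing on `V` is therefore discontinuous, and `h a ≠ 0` forces
the support of `a` into `U`; two disjoint sets cannot both lie in `U`.
-/

open Filter

section DenseSubmodule

variable {𝕜 E : Type*} [Field 𝕜] [TopologicalSpace 𝕜] [T1Space 𝕜]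
  [AddCommGroup E] [Module 𝕜 E] [TopologicalSpace E]

theorem Submodule.exists_dual_not_continuous_of_dense {V : Submodule 𝕜 E}
    (hV : Dense (V : Set E)) {x : E} (hx : x ∉ V) :
    ∃ f : Module.Dual 𝕜 E, ¬Continuous f ∧ ∀ v ∈ V, f v = 0 := by
  obtain ⟨f, hfx, hfV⟩ := V.exists_dual_map_eq_bot_of_notMem hx inferInstance
  have hVker : V ≤ LinearMap.ker f := LinearMap.le_ker_iff_map.mpr hfV
  refine ⟨f, fun hf => hfx ?_, fun v hv => hVker hv⟩
  have hker : IsClosed (LinearMap.ker f : Set E) := isClosed_singleton.preimage hf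
  exact hker.closure_subset_iff.mpr hVker (hV.closure_eq ▸ Set.mem_univ x)

end DenseSubmodule

namespace lp

variable {α 𝕜 : Type*} {E : α → Type*} [NormedField 𝕜] [∀ i, NormedAddCommGroup (E i)]
  [∀ i, NormedSpace 𝕜 (E i)] {p : ENNReal}

variable (𝕜 E p) in
def eventuallyZero (l : Filter α) : Submodule 𝕜 (lp E p) where
  carrier := {x | ∀ᶠ i in l, x i = 0}
  zero_mem' := by simp
  add_mem' {x y} hx hy := by
    filter_upwards [hx, hy] with i hxi hyi
    simp [hxi, hyi]
  smul_mem' c x hx := by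
    filter_upwards [hx] with i hxi
    simp [hxi]

theorem dense_eventuallyZero [Fact (1 ≤ p)] (hp : p ≠ ⊤) {l : Filter α} (hl : l ≤ cofinite) :
    Dense (eventuallyZero 𝕜 E p l : Set (lp E p)) := by
  classical
  refine fun x => mem_closure_of_tendsto (lp.hasSum_single hp x) (Eventually.of_forall fun s => ?_)
  refine Submodule.sum_mem _ fun i _ => hl ?_
  filter_upwards [eventually_cofinite_ne i] with j hji
  simp [Pi.single_eq_of_ne hji]

theorem support_mem_of_not_eventuallyZero {U : Ultrafilter α} {x : lp E p}
    (hx : x ∉ eventuallyZero 𝕜 E p U) : {i | (x : ∀ i, E i) i ≠ 0} ∈ U :=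
  Ultrafilter.eventually_not.mpr hx

end lp

theorem memℓp_inv_two_pow {p : ENNReal} (hp : 1 ≤ p) :
    Memℓp (fun n : ℕ => ((2 : ℝ)⁻¹) ^ n) p := by
  refine Memℓp.of_exponent_ge (memℓp_gen ?_) hp
  simpa using summable_geometric_two

theorem stmt_19 (p : ENNReal) [Fact (1 ≤ p)] (hp : p ≠ ⊤) :
    ∃ h : lp (fun _ : ℕ => ℝ) p →ₗ[ℝ] ℝ,
      ¬Continuous h ∧
      ∀ a : ℕ → lp (fun _ : ℕ => ℝ) p,
        (∀ k m : ℕ, k ≠ m →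
          {n : ℕ | (a k : ℕ → ℝ) n ≠ 0} ∩ {n : ℕ | (a m : ℕ → ℝ) n ≠ 0} = ∅) →
        ∀ k m : ℕ, h (a k) ≠ 0 → h (a m) ≠ 0 → k = m := by
  set V := lp.eventuallyZero ℝ (fun _ : ℕ => ℝ) p (hyperfilter ℕ)
  let x₀ : lp (fun _ : ℕ => ℝ) p := ⟨_, memℓp_inv_two_pow Fact.out⟩
  have hx₀ : x₀ ∉ V := fun h => by simpa [x₀] using h.exists
  obtain ⟨h, hdisc, hV⟩ := Submodule.exists_dual_not_continuous_of_dense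
    (lp.dense_eventuallyZero hp hyperfilter_le_cofinite) hx₀
  refine ⟨h, hdisc, fun a hdisj k m hk hm => by_contra fun hkm => ?_⟩
  have hsupp : ∀ j, h (a j) ≠ 0 → {n | (a j : ℕ → ℝ) n ≠ 0} ∈ (hyperfilter ℕ : Ultrafilter ℕ) :=
    fun j hj => lp.support_mem_of_not_eventuallyZero fun hmem => hj (hV _ hmem)
  simpa [hdisj k m hkm] using inter_mem (hsupp k hk) (hsupp m hm)
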